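/- Let n > 1 and let d(x) = ∏_{m | n, μ(m) = -1} δ(m)Φ_m(x), where the product is over divisors m of n with μ(m) = -1. Then modulo x^(r+1), d(x) ≡ ∏_{d ≤ r} (1 - x^d)^(k(d)), where k(d) = Σ_{m | n, μ(m) = -1, d | m} μ(m/d); moreover k(1) = -2^(ν(n)-1) and |k(d)| ≤ 2^(ν(n)-1) for all d. -/

import Mathlib

open PowerSeries ArithmeticFunction

/-- Integer power of a power series over `ℚ`, with negative exponents interpreted via the
power series inverse. -/
noncomputable def zp (f : PowerSeries ℚ) (k : ℤ) : PowerSeries ℚ :=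
  if 0 ≤ k then f ^ k.toNat else (f ^ (-k).toNat)⁻¹

/-- `δ m = -1` if `m = 1` and `1` otherwise. -/
def delta (m : ℕ) : ℤ := if m = 1 then -1 else 1

/-!
Möbius inversion of `∏_{d ∣ m} δ(d) Φ_d = 1 - X ^ m` in the unit group of `ℚ⟦X⟧` gives
`δ(m) Φ_m = ∏_{d ∣ m} (1 - X ^ d) ^ μ(m / d)`. Multiplying over the divisors `m` of `n` with
`μ m = -1` and exchanging the two products writes `d(x)` as `∏_{d ∣ n} (1 - X ^ d) ^ k(d)`, and the
factors with `d > r` are `≡ 1` modulo `X ^ (r + 1)`.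

Each `|k d|` is at most the number `N` of divisors `m ∣ n` with `μ m = -1`, with `k 1 = -N`.
Since `∑_{m ∣ n} μ m = 0` and `∑_{m ∣ n} μ(m)² = 2 ^ ν(n)`, and `μ² - μ` is twice the indicator
of `μ = -1`, we get `N = 2 ^ (ν(n) - 1)`.
-/

open Finset
open scoped ArithmeticFunction.Moebius

theorem Finset.prod_zpow_eq_zpow_sum {ι G : Type*} [CommGroup G] (s : Finset ι) (f : ι → ℤ)
    (a : G) : ∏ i ∈ s, a ^ f i = a ^ ∑ i ∈ s, f i := by
  classical
  induction s using Finset.induction_on with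
  | empty => simp
  | insert i s hi ih => rw [prod_insert hi, sum_insert hi, ih, zpow_add]

theorem Subgroup.prod_div_prod_filter_mem {ι G : Type*} [CommGroup G] (H : Subgroup G)
    (s : Finset ι) (p : ι → Prop) [DecidablePred p] (f : ι → G) (hf : ∀ i ∈ s, ¬p i → f i ∈ H) :
    (∏ i ∈ s, f i) / ∏ i ∈ s with p i, f i ∈ H := by
  rw [← prod_filter_mul_prod_filter_not s p, mul_div_cancel_left]
  exact H.prod_mem fun i hi => hf i (mem_filter.1 hi).1 (mem_filter.1 hi).2

theorem Nat.prod_filter_divisors_prod_divisors_comm {M : Type*} [CommMonoid M] (n : ℕ)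
    (p : ℕ → Prop) [DecidablePred p] (f : ℕ → ℕ → M) :
    ∏ m ∈ n.divisors with p m, ∏ d ∈ m.divisors, f m d =
      ∏ d ∈ n.divisors, ∏ m ∈ n.divisors with p m ∧ d ∣ m, f m d := by
  refine prod_comm' fun m d => ?_
  simp only [mem_filter, Nat.mem_divisors]
  constructor
  · rintro ⟨⟨⟨hmn, hn⟩, hp⟩, hdm, -⟩
    exact ⟨⟨⟨hmn, hn⟩, hp, hdm⟩, hdm.trans hmn, hn⟩
  · rintro ⟨⟨⟨hmn, hn⟩, hp, hdm⟩, -⟩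
    exact ⟨⟨⟨hmn, hn⟩, hp⟩, hdm, ne_zero_of_dvd_ne_zero hn hmn⟩

theorem Nat.card_divisors_filter_squarefree {n : ℕ} (hn : n ≠ 0) :
    #{d ∈ n.divisors | Squarefree d} = 2 ^ #n.primeFactors := by
  rw [card_eq_sum_ones, Nat.sum_divisors_filter_squarefree hn, ← card_eq_sum_ones,
    card_powerset, Nat.factors_eq, List.toFinset_coe, Nat.primeFactors]

namespace ArithmeticFunction

theorem sum_divisors_moebius {n : ℕ} (hn : n ≠ 1) : ∑ d ∈ n.divisors, μ d = 0 := by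
  rw [← coe_mul_zeta_apply, moebius_mul_coe_zeta, one_apply_ne hn]

theorem card_divisors_filter_moebius_eq_neg_one {n : ℕ} (hn : 1 < n) :
    #{d ∈ n.divisors | μ d = -1} = 2 ^ (#n.primeFactors - 1) := by
  have hcount : 2 * (#{d ∈ n.divisors | μ d = -1} : ℤ) = ∑ d ∈ n.divisors, (μ d ^ 2 - μ d) := by
    rw [card_filter, Nat.cast_sum, mul_sum]
    refine sum_congr rfl fun d _ => ?_
    rcases moebius_eq_or d with h | h | h <;> simp [h]
  have hsq : ∑ d ∈ n.divisors, μ d ^ 2 = 2 ^ #n.primeFactors := by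
    simp only [moebius_sq, ← sum_filter, sum_const, nsmul_one,
      Nat.card_divisors_filter_squarefree (by omega : n ≠ 0), Nat.cast_pow, Nat.cast_ofNat]
  have hν : #n.primeFactors ≠ 0 := (card_pos.2 (Nat.nonempty_primeFactors.2 hn)).ne'
  rw [sum_sub_distrib, hsq, sum_divisors_moebius hn.ne', sub_zero,
    ← Nat.sub_one_add_one hν, pow_succ'] at hcount
  exact_mod_cast mul_left_cancel₀ two_ne_zero hcount

theorem abs_sum_moebius_le_card (s : Finset ℕ) (f : ℕ → ℕ) : |∑ m ∈ s, μ (f m)| ≤ #s := by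
  simpa using (abs_sum_le_sum_abs _ s).trans (sum_le_card_nsmul s _ 1 fun m _ => abs_moebius_le_one)

end ArithmeticFunction

theorem prod_divisors_delta {m : ℕ} (hm : m ≠ 0) : ∏ d ∈ m.divisors, delta d = -1 := by
  rw [prod_eq_single_of_mem 1 (Nat.one_mem_divisors.2 hm) fun d _ hd => by simp [delta, hd]]
  rfl

namespace Polynomial

variable (R : Type*) [CommRing R]

noncomputable def signedCyclotomic (m : ℕ) : R[X] := C (delta m : R) * cyclotomic m R

theorem coeff_zero_signedCyclotomic (m : ℕ) : (signedCyclotomic R m).coeff 0 = 1 := by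
  rcases lt_trichotomy m 1 with hm | rfl | hm
  · simp [signedCyclotomic, Nat.lt_one_iff.1 hm, delta]
  · simp [signedCyclotomic, delta]
  · simp [signedCyclotomic, delta, hm.ne', cyclotomic_coeff_zero R hm]

theorem prod_divisors_signedCyclotomic {m : ℕ} (hm : 0 < m) :
    ∏ d ∈ m.divisors, signedCyclotomic R d = 1 - X ^ m := by
  simp only [signedCyclotomic, prod_mul_distrib, prod_cyclotomic_eq_X_pow_sub_one hm, ← map_prod,
    ← Int.cast_prod, prod_divisors_delta hm.ne']
  simp

end Polynomial

namespace PowerSeries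

section CommRing

variable (R : Type*) [CommRing R]

def unitsCongrOneModXPow (n : ℕ) : Subgroup R⟦X⟧ˣ where
  carrier := {u | X ^ n ∣ (u : R⟦X⟧) - 1}
  one_mem' := by simp
  mul_mem' {u v} hu hv := by
    have : (↑(u * v) : R⟦X⟧) - 1 = u * (v - 1) + (u - 1) := by push_cast; ring
    simpa only [Set.mem_ofPred_eq, this] using dvd_add (dvd_mul_of_dvd_right hv _) hu
  inv_mem' {u} hu := by
    have : (↑u⁻¹ : R⟦X⟧) - 1 = -↑u⁻¹ * (u - 1) := by
      rw [neg_mul, mul_sub, Units.inv_mul, mul_one, neg_sub]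
    simpa only [Set.mem_ofPred_eq, this] using dvd_mul_of_dvd_right hu _

variable {R} in
theorem coeff_eq_of_div_mem_unitsCongrOneModXPow {n : ℕ} {u v : R⟦X⟧ˣ}
    (h : u / v ∈ unitsCongrOneModXPow R n) {i : ℕ} (hi : i < n) :
    coeff i (u : R⟦X⟧) = coeff i (v : R⟦X⟧) := by
  have huv : (u : R⟦X⟧) - v = (↑(u / v) - 1) * v := by
    rw [sub_mul, ← Units.val_mul, div_mul_cancel, one_mul]
  rw [← sub_eq_zero, ← map_sub, huv]
  exact X_pow_dvd_iff.1 (dvd_mul_of_dvd_left h _) i hi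

noncomputable def signedCyclotomicUnit (m : ℕ) : R⟦X⟧ˣ :=
  (isUnit_iff_constantCoeff (φ := (Polynomial.signedCyclotomic R m : R⟦X⟧)).2 <| by
    rw [← coeff_zero_eq_constantCoeff_apply, Polynomial.coeff_coe,
      Polynomial.coeff_zero_signedCyclotomic]
    exact isUnit_one).unit

@[simp]
theorem val_signedCyclotomicUnit (m : ℕ) :
    (signedCyclotomicUnit R m : R⟦X⟧) = Polynomial.signedCyclotomic R m :=
  rfl

-- Defined as a product of units so that it is a unit for every `m`; it is `1 - X ^ m` for `0 < m`.
noncomputable def oneSubXPowUnit (m : ℕ) : R⟦X⟧ˣ :=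
  ∏ d ∈ m.divisors, signedCyclotomicUnit R d

theorem val_oneSubXPowUnit {m : ℕ} (hm : 0 < m) : (oneSubXPowUnit R m : R⟦X⟧) = 1 - X ^ m := by
  rw [oneSubXPowUnit, Units.coe_prod]
  simp only [val_signedCyclotomicUnit, ← Polynomial.coeToPowerSeries.ringHom_apply, ← map_prod,
    Polynomial.prod_divisors_signedCyclotomic R hm]
  simp

theorem oneSubXPowUnit_mem_unitsCongrOneModXPow {m n : ℕ} (h : n ≤ m) :
    oneSubXPowUnit R m ∈ unitsCongrOneModXPow R n := by
  change X ^ n ∣ (oneSubXPowUnit R m : R⟦X⟧) - 1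
  rcases Nat.eq_zero_or_pos m with rfl | hm
  · rw [Nat.le_zero.1 h, pow_zero]
    exact one_dvd _
  · rw [val_oneSubXPowUnit R hm, sub_sub_cancel_left, dvd_neg]
    exact pow_dvd_pow X h

theorem signedCyclotomicUnit_eq_prod_zpow_moebius {m : ℕ} (hm : 0 < m) :
    signedCyclotomicUnit R m = ∏ d ∈ m.divisors, oneSubXPowUnit R d ^ μ (m / d) := by
  rw [← (prod_eq_iff_prod_pow_moebius_eq (f := signedCyclotomicUnit R)).1 (fun _ _ => rfl) m hm]
  exact Nat.prod_divisorsAntidiagonal' fun a b => oneSubXPowUnit R b ^ μ a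

theorem prod_filter_divisors_signedCyclotomicUnit (n : ℕ) (p : ℕ → Prop) [DecidablePred p] :
    ∏ m ∈ n.divisors with p m, signedCyclotomicUnit R m =
      ∏ d ∈ n.divisors, oneSubXPowUnit R d ^ ∑ m ∈ n.divisors with p m ∧ d ∣ m, μ (m / d) := by
  simp_rw [← prod_zpow_eq_zpow_sum]
  rw [← Nat.prod_filter_divisors_prod_divisors_comm]
  refine prod_congr rfl fun m hm => ?_
  exact signedCyclotomicUnit_eq_prod_zpow_moebius R (Nat.pos_of_mem_divisors (mem_filter.1 hm).1)

theorem coeff_prod_divisors_oneSubXPowUnit_zpow {n r i : ℕ} (k : ℕ → ℤ)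
    (hk : ∀ j ∉ n.divisors, k j = 0) (hi : i ≤ r) :
    coeff i (↑(∏ d ∈ n.divisors, oneSubXPowUnit R d ^ k d) : R⟦X⟧) =
      coeff i (↑(∏ j ∈ Icc 1 r, oneSubXPowUnit R j ^ k j) : R⟦X⟧) := by
  have htrunc : ∏ d ∈ n.divisors with d ≤ r, oneSubXPowUnit R d ^ k d =
      ∏ j ∈ Icc 1 r, oneSubXPowUnit R j ^ k j := by
    refine prod_subset (fun d hd => ?_) fun j hj hjn => ?_
    · obtain ⟨hd, hdr⟩ := mem_filter.1 hd
      exact mem_Icc.2 ⟨Nat.pos_of_mem_divisors hd, hdr⟩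
    · rw [hk j fun h => hjn (mem_filter.2 ⟨h, (mem_Icc.1 hj).2⟩), zpow_zero]
  rw [← htrunc]
  refine coeff_eq_of_div_mem_unitsCongrOneModXPow
    ((unitsCongrOneModXPow R (r + 1)).prod_div_prod_filter_mem _ _ _ fun d _ hd => ?_)
    (Nat.lt_succ_of_le hi)
  exact zpow_mem (oneSubXPowUnit_mem_unitsCongrOneModXPow R (by omega)) _

end CommRing

theorem val_inv_eq_inv_val {k : Type*} [Field k] (u : k⟦X⟧ˣ) : (↑u⁻¹ : k⟦X⟧) = (u : k⟦X⟧)⁻¹ :=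
  ((PowerSeries.inv_eq_iff_mul_eq_one (isUnit_iff_constantCoeff.1 u.isUnit).ne_zero).2
    u.inv_mul).symm

end PowerSeries

theorem zp_val (u : (PowerSeries ℚ)ˣ) (t : ℤ) : zp u t = ↑(u ^ t) := by
  rcases le_or_gt 0 t with ht | ht
  · lift t to ℕ using ht
    simp [zp]
  · rw [zp, if_neg ht.not_ge, ← Units.val_pow_eq_pow_val, ← PowerSeries.val_inv_eq_inv_val,
      ← zpow_natCast, Int.toNat_of_nonneg (neg_nonneg.2 ht.le), zpow_neg, inv_inv]

/-- For `n > 1`, the divisor `d(x) = ∏_{m ∣ n, μ(m) = -1} δ(m)Φ_m(x)` of `x^n - 1`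
satisfies, modulo `x^(r+1)`, `d(x) ≡ ∏_{j ≤ r} (1-x^j)^(k j)` where
`k j = ∑_{m ∣ n, μ(m) = -1, j ∣ m} μ(m/j)`; moreover `k 1 = -2^(ν(n)-1)` and
`|k j| ≤ 2^(ν(n)-1)`. -/
theorem divisor_congr_and_exponent_bounds (n r : ℕ) (hn : 1 < n) (k : ℕ → ℤ)
    (hk : ∀ j, k j = ∑ m ∈ n.divisors.filter (fun m => moebius m = -1 ∧ j ∣ m),
      moebius (m / j)) :
    (∀ i ≤ r,
      ((∏ m ∈ n.divisors.filter (fun m => moebius m = -1),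
          (Polynomial.C (delta m : ℚ) * Polynomial.cyclotomic m ℚ) : Polynomial ℚ) :
        PowerSeries ℚ).coeff i =
      (∏ j ∈ Finset.Icc 1 r, zp (1 - (PowerSeries.X : PowerSeries ℚ) ^ j) (k j)).coeff i) ∧
    k 1 = -2 ^ (n.primeFactors.card - 1) ∧
    ∀ j, |k j| ≤ 2 ^ (n.primeFactors.card - 1) := by
  have hcard := card_divisors_filter_moebius_eq_neg_one hn
  refine ⟨fun i hi => ?_, ?_, fun j => ?_⟩
  · have hk0 : ∀ j ∉ n.divisors, k j = 0 := fun j hj => by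
      refine (hk j).trans (sum_eq_zero fun m hm => ?_)
      obtain ⟨hm, -, hjm⟩ := mem_filter.1 hm
      exact absurd (Nat.mem_divisors.2 ⟨hjm.trans (Nat.dvd_of_mem_divisors hm), by omega⟩) hj
    have hlhs : ((∏ m ∈ n.divisors with μ m = -1, Polynomial.signedCyclotomic ℚ m :
        Polynomial ℚ) : ℚ⟦X⟧) = ↑(∏ d ∈ n.divisors, oneSubXPowUnit ℚ d ^ k d) := by
      simp_rw [hk, ← prod_filter_divisors_signedCyclotomicUnit, Units.coe_prod,
        val_signedCyclotomicUnit, ← Polynomial.coeToPowerSeries.ringHom_apply, map_prod]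
    have hrhs : ∏ j ∈ Icc 1 r, zp (1 - X ^ j) (k j) =
        ↑(∏ j ∈ Icc 1 r, oneSubXPowUnit ℚ j ^ k j) := by
      rw [Units.coe_prod]
      exact prod_congr rfl fun j hj => by rw [← val_oneSubXPowUnit ℚ (mem_Icc.1 hj).1, zp_val]
    rw [hrhs, ← coeff_prod_divisors_oneSubXPowUnit_zpow ℚ k hk0 hi, ← hlhs]
    rfl
  · simp only [hk, one_dvd, and_true, Nat.div_one]
    rw [sum_congr rfl fun m hm => (mem_filter.1 hm).2, sum_const, hcard]
    simp
  · have hsub : #{m ∈ n.divisors | μ m = -1 ∧ j ∣ m} ≤ 2 ^ (#n.primeFactors - 1) :=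
      hcard ▸ card_le_card fun m hm => mem_filter.2 ⟨(mem_filter.1 hm).1, (mem_filter.1 hm).2.1⟩
    rw [hk]
    exact (abs_sum_moebius_le_card _ _).trans (by exact_mod_cast hsub)
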